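/- arXiv:1401.3582 — 4 statements merged into one kernel-verified Lean document; each statement's English description precedes it below -/
import Mathlib

section
/- Let q > 0 be a real number, k ≤ n natural numbers, and A_0,…,A_n and B_0,…,B_n real numbers such that Σ_{j=0}^n A_j x^{n-j} y^j = q^{k-n} Σ_{j=0}^n B_j (x+(q-1)y)^{n-j} (x-y)^j as polynomials. Then for every r with 0 ≤ r ≤ n: Σ_{j=0}^n C(j, r) A_j = q^{k-r} Σ_{j=0}^n (-1)^j (q-1)^{r-j} C(n-j, r-j) B_j. -/
/-!
Setting `x = 1`, `y = z + 1` turns the identity into an equality of polynomials in `z`: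
`∑ A_j (z + 1)^j = q^(k-n) ∑ B_j ((q - 1) z + q)^(n-j) (-z)^j`. Comparing the coefficients of `z^r`
gives `∑ C(j, r) A_j` on the left and `q^(k-n) q^(n-r) ∑_{j ≤ r} (-1)^j (q - 1)^(r-j) C(n-j, r-j) B_j`
on the right.
-/

open Finset Polynomial

namespace Polynomial

variable {R : Type*}

theorem coeff_C_mul_X_add_C_pow [CommSemiring R] (a b : R) (m i : ℕ) :
    ((C a * X + C b) ^ m).coeff i = a ^ i * b ^ (m - i) * m.choose i := by
  have hcomp : (C a * X + C b) ^ m = ((X + C b) ^ m).comp (C a * X) := by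
    simp only [pow_comp, add_comp, X_comp, C_comp]
  rw [hcomp, comp_C_mul_X_coeff, coeff_X_add_C_pow]
  ring

theorem coeff_sum_C_mul_X_add_one_pow [Semiring R] (s : Finset ℕ) (c : ℕ → R) (r : ℕ) :
    (∑ j ∈ s, C (c j) * (X + 1) ^ j).coeff r = ∑ j ∈ s, (j.choose r : R) * c j := by
  simp only [finsetSum_coeff, coeff_C_mul, coeff_X_add_one_pow, (Nat.cast_commute _ _).eq]

theorem coeff_sum_C_mul_C_mul_X_add_C_pow_mul_neg_X_pow [CommRing R] (a b : R) (c : ℕ → R)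
    {n r : ℕ} (hr : r ≤ n) :
    (∑ j ∈ range (n + 1), C (c j) * (C a * X + C b) ^ (n - j) * (-X) ^ j).coeff r =
      b ^ (n - r) * ∑ j ∈ range (n + 1),
        if j ≤ r then (-1) ^ j * a ^ (r - j) * ((n - j).choose (r - j) : R) * c j else 0 := by
  rw [finsetSum_coeff, mul_sum]
  refine sum_congr rfl fun j _ => ?_
  have hsign : C (c j) * (C a * X + C b) ^ (n - j) * (-X) ^ j =
      C ((-1) ^ j * c j) * ((C a * X + C b) ^ (n - j) * X ^ j) := by
    rw [neg_pow, C_mul, C_pow, C_neg, C_1]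
    ring
  rw [hsign, coeff_C_mul, coeff_mul_X_pow']
  split_ifs with hjr
  · rw [coeff_C_mul_X_add_C_pow, show n - j - (r - j) = n - r by omega]
    ring
  · simp

end Polynomial

theorem mac_to_form3_general (q : ℝ) (hq : 0 < q) (k n : ℕ) (A B : ℕ → ℝ)
    (h : ∀ x y : ℝ,
      ∑ j ∈ Finset.range (n + 1), A j * x ^ (n - j) * y ^ j =
      q ^ ((k : ℤ) - (n : ℤ)) *
        ∑ j ∈ Finset.range (n + 1), B j * (x + (q - 1) * y) ^ (n - j) * (x - y) ^ j) :
    ∀ r ≤ n,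
      ∑ j ∈ Finset.range (n + 1), (j.choose r : ℝ) * A j =
      q ^ ((k : ℤ) - (r : ℤ)) *
        ∑ j ∈ Finset.range (n + 1),
          if j ≤ r then
            (-1 : ℝ) ^ j * (q - 1) ^ (r - j) * ((n - j).choose (r - j) : ℝ) * B j
          else 0 := by
  intro r hr
  have hpoly : ∑ j ∈ range (n + 1), C (A j) * (X + 1) ^ j =
      C (q ^ ((k : ℤ) - n)) *
        ∑ j ∈ range (n + 1), C (B j) * (C (q - 1) * X + C q) ^ (n - j) * (-X) ^ j := by
    refine Polynomial.funext fun z => ?_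
    simp only [eval_finsetSum, eval_mul, eval_C, eval_pow, eval_add, eval_X, eval_one, eval_neg]
    convert h 1 (z + 1) using 3 with j <;> ring
  have hcoeff := congrArg (coeff · r) hpoly
  simp only [coeff_sum_C_mul_X_add_one_pow, coeff_C_mul,
    coeff_sum_C_mul_C_mul_X_add_C_pow_mul_neg_X_pow _ _ _ hr] at hcoeff
  rw [hcoeff, ← mul_assoc, ← zpow_natCast, ← zpow_add₀ hq.ne', Nat.cast_sub hr]
  ring_nf

theorem mac_to_form3 (q : ℝ) (hq : 0 < q) (k n : ℕ) (hkn : k ≤ n) (A B : ℕ → ℝ)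
    (h : ∀ x y : ℝ,
      ∑ j ∈ Finset.range (n + 1), A j * x ^ (n - j) * y ^ j =
      q ^ ((k : ℤ) - (n : ℤ)) *
        ∑ j ∈ Finset.range (n + 1), B j * (x + (q - 1) * y) ^ (n - j) * (x - y) ^ j) :
    ∀ r ≤ n,
      ∑ j ∈ Finset.range (n + 1), (j.choose r : ℝ) * A j =
      q ^ ((k : ℤ) - (r : ℤ)) *
        ∑ j ∈ Finset.range (n + 1),
          if j ≤ r then
            (-1 : ℝ) ^ j * (q - 1) ^ (r - j) * ((n - j).choose (r - j) : ℝ) * B j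
          else 0 :=
  mac_to_form3_general q hq k n A B h
end

section
/- Let q be a real number, k ≤ n natural numbers, and A_0,…,A_n and B_0,…,B_n real numbers such that for every r with 0 ≤ r ≤ n: A_r = q^{k-n} Σ_{j=0}^n B_j Σ_{i=0}^r (-1)^i C(n-j, r-i) C(j, i) (q-1)^{r-i}. Then the polynomial identity Σ_{j=0}^n A_j x^{n-j} y^j = q^{k-n} Σ_{j=0}^n B_j (x+(q-1)y)^{n-j} (x-y)^j holds. -/
/-!
Expanding both binomials, the coefficient of `x ^ (n - r) * y ^ r` in
`(x + (q - 1) * y) ^ (n - j) * (x - y) ^ j` is the Krawtchouk number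
`K_r(j) = ∑ i, (-1) ^ i * C(n - j, r - i) * C(j, i) * (q - 1) ^ (r - i)` (a Cauchy product).
Substituting form (2) for `A r` and exchanging the sums over `r` and `j` gives form (1).
-/

open Finset Polynomial

theorem sum_range_mul_sum_range_eq_sum_range_sum {R : Type*} [CommSemiring R] {f g : ℕ → R}
    {m l : ℕ} (hf : ∀ a, m < a → f a = 0) (hg : ∀ i, l < i → g i = 0) :
    (∑ a ∈ range (m + 1), f a) * ∑ i ∈ range (l + 1), g i =
      ∑ r ∈ range (m + l + 1), ∑ i ∈ range (r + 1), f (r - i) * g i := by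
  have coeff_sum_monomial : ∀ {N : ℕ} {u : ℕ → R}, (∀ a, N < a → u a = 0) →
      ∀ a, (∑ b ∈ range (N + 1), monomial b (u b)).coeff a = u a := by
    intro N u hu a
    simp only [finsetSum_coeff, coeff_monomial, sum_ite_eq', mem_range]
    split_ifs with ha
    · rfl
    · exact (hu a (by omega)).symm
  have natDegree_sum_monomial_le : ∀ {N : ℕ} {u : ℕ → R},
      (∑ b ∈ range (N + 1), monomial b (u b)).natDegree ≤ N := by
    intro N u
    refine natDegree_sum_le_of_forall_le _ _ fun b hb => (natDegree_monomial_le _).trans ?_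
    simpa [Nat.lt_succ_iff] using hb
  set P : R[X] := ∑ a ∈ range (m + 1), monomial a (f a)
  set Q : R[X] := ∑ i ∈ range (l + 1), monomial i (g i)
  have hP : ∀ a, P.coeff a = f a := coeff_sum_monomial hf
  have hQ : ∀ i, Q.coeff i = g i := coeff_sum_monomial hg
  have hdeg : (P * Q).natDegree < m + l + 1 :=
    Nat.lt_succ_of_le (natDegree_mul_le_of_le natDegree_sum_monomial_le natDegree_sum_monomial_le)
  calc (∑ a ∈ range (m + 1), f a) * ∑ i ∈ range (l + 1), g i = (P * Q).eval 1 := by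
        simp [P, Q, eval_finsetSum]
    _ = ∑ r ∈ range (m + l + 1), (P * Q).coeff r := by simp [eval_eq_sum_range' hdeg]
    _ = _ := by
        refine sum_congr rfl fun r _ => ?_
        rw [coeff_mul, ← Nat.sum_antidiagonal_swap, Nat.sum_antidiagonal_eq_sum_range_succ_mk]
        simp only [Prod.swap, hP, hQ, Nat.succ_eq_add_one]

theorem add_mul_pow_mul_add_mul_pow {R : Type*} [CommSemiring R] (x y c d : R) (m l : ℕ) :
    (x + c * y) ^ m * (x + d * y) ^ l =
      ∑ r ∈ range (m + l + 1),
        (∑ i ∈ range (r + 1), m.choose (r - i) * c ^ (r - i) * (l.choose i * d ^ i)) *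
          (x ^ (m + l - r) * y ^ r) := by
  have binomial_eq_zero : ∀ (e : R) (N a : ℕ), N < a →
      (e * y) ^ a * x ^ (N - a) * (N.choose a : R) = 0 := fun e N a ha => by
    rw [Nat.choose_eq_zero_of_lt ha, Nat.cast_zero, mul_zero]
  rw [add_comm x, add_comm x, add_pow, add_pow,
    sum_range_mul_sum_range_eq_sum_range_sum (binomial_eq_zero c m) (binomial_eq_zero d l)]
  refine sum_congr rfl fun r _ => ?_
  rw [sum_mul]
  refine sum_congr rfl fun i hi => ?_
  have hir : i ≤ r := Nat.lt_succ_iff.mp (mem_range.mp hi)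
  rcases lt_or_ge m (r - i) with hm | hm
  · simp [Nat.choose_eq_zero_of_lt hm]
  rcases lt_or_ge l i with hl | hl
  · simp [Nat.choose_eq_zero_of_lt hl]
  have hx : x ^ (m - (r - i)) * x ^ (l - i) = x ^ (m + l - r) := by
    rw [← pow_add]; congr 1; omega
  have hy : y ^ (r - i) * y ^ i = y ^ r := by
    rw [← pow_add]; congr 1; omega
  rw [← hx, ← hy]
  ring

def krawtchouk {R : Type*} [CommRing R] (q : R) (n r j : ℕ) : R :=
  ∑ i ∈ range (r + 1),
    (-1 : R) ^ i * ((n - j).choose (r - i) : R) * (j.choose i : R) * (q - 1) ^ (r - i)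

theorem sum_krawtchouk_mul_pow_mul_pow {R : Type*} [CommRing R] (q x y : R) {n j : ℕ}
    (hj : j ≤ n) :
    ∑ r ∈ range (n + 1), krawtchouk q n r j * (x ^ (n - r) * y ^ r) =
      (x + (q - 1) * y) ^ (n - j) * (x - y) ^ j := by
  have expansion := add_mul_pow_mul_add_mul_pow x y (q - 1) (-1) (n - j) j
  rw [Nat.sub_add_cancel hj] at expansion
  rw [show x - y = x + -1 * y by ring, expansion]
  refine sum_congr rfl fun r _ => ?_
  rw [krawtchouk]
  congr 1
  refine sum_congr rfl fun i _ => ?_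
  ring

theorem form2_to_mac_general (q : ℝ) (k n : ℕ) (A B : ℕ → ℝ)
    (h : ∀ r ≤ n,
      A r = q ^ ((k : ℤ) - (n : ℤ)) *
        ∑ j ∈ Finset.range (n + 1), B j *
          ∑ i ∈ Finset.range (r + 1),
            (-1 : ℝ) ^ i * ((n - j).choose (r - i) : ℝ) * (j.choose i : ℝ) * (q - 1) ^ (r - i)) :
    ∀ x y : ℝ,
      ∑ j ∈ Finset.range (n + 1), A j * x ^ (n - j) * y ^ j =
      q ^ ((k : ℤ) - (n : ℤ)) *
        ∑ j ∈ Finset.range (n + 1), B j * (x + (q - 1) * y) ^ (n - j) * (x - y) ^ j := by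
  have hA : ∀ r ≤ n, A r = q ^ ((k : ℤ) - (n : ℤ)) *
      ∑ j ∈ range (n + 1), B j * krawtchouk q n r j := h
  intro x y
  calc ∑ r ∈ range (n + 1), A r * x ^ (n - r) * y ^ r
      = ∑ r ∈ range (n + 1), q ^ ((k : ℤ) - (n : ℤ)) *
          ∑ j ∈ range (n + 1), B j * (krawtchouk q n r j * (x ^ (n - r) * y ^ r)) := by
        refine sum_congr rfl fun r hr => ?_
        rw [mul_assoc, hA r (Nat.lt_succ_iff.mp (mem_range.mp hr)), mul_assoc, sum_mul]
        simp only [mul_assoc]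
    _ = q ^ ((k : ℤ) - (n : ℤ)) * ∑ j ∈ range (n + 1),
          B j * ∑ r ∈ range (n + 1), krawtchouk q n r j * (x ^ (n - r) * y ^ r) := by
        simp only [mul_sum]
        rw [sum_comm]
    _ = _ := by
        congr 1
        refine sum_congr rfl fun j hj => ?_
        rw [sum_krawtchouk_mul_pow_mul_pow q x y (Nat.lt_succ_iff.mp (mem_range.mp hj)), mul_assoc]

theorem form2_to_mac (q : ℝ) (k n : ℕ) (hkn : k ≤ n) (A B : ℕ → ℝ)
    (h : ∀ r ≤ n,
      A r = q ^ ((k : ℤ) - (n : ℤ)) *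
        ∑ j ∈ Finset.range (n + 1), B j *
          ∑ i ∈ Finset.range (r + 1),
            (-1 : ℝ) ^ i * ((n - j).choose (r - i) : ℝ) * (j.choose i : ℝ) * (q - 1) ^ (r - i)) :
    ∀ x y : ℝ,
      ∑ j ∈ Finset.range (n + 1), A j * x ^ (n - j) * y ^ j =
      q ^ ((k : ℤ) - (n : ℤ)) *
        ∑ j ∈ Finset.range (n + 1), B j * (x + (q - 1) * y) ^ (n - j) * (x - y) ^ j :=
  form2_to_mac_general q k n A B h
end

section
/- Let q > 0 be a real number, k ≤ n natural numbers, and A_0,…,A_n and B_0,…,B_n real numbers such that for every r with 0 ≤ r ≤ n: Σ_{j=0}^n C(j, r) A_j = q^{k-r} Σ_{j=0}^n (-1)^j (q-1)^{r-j} C(n-j, r-j) B_j. Then Σ_{j=0}^n A_j x^{n-j} y^j = q^{k-n} Σ_{j=0}^n B_j (x+(q-1)y)^{n-j} (x-y)^j as polynomials. -/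
/-!
Both sides are expanded in the basis `x ^ (n - r) * (y - x) ^ r`. Writing `y = (y - x) + x`, the
coefficient of the left side is the binomial moment `∑ j, C(j, r) A j`; writing
`x + (q - 1) y = q x + (q - 1) (y - x)` and `x - y = -(y - x)`, the coefficient of the right side is
the right-hand side of the moment identity once `q ^ (k - n) * q ^ (n - r)` is merged into
`q ^ (k - r)`, which needs `q ≠ 0`.
-/

open Finset

section CommRing

variable {R : Type*} [CommRing R]

theorem pow_mul_pow_eq_sum_choose_mul (x y : R) {j n : ℕ} (hj : j ≤ n) :
    x ^ (n - j) * y ^ j =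
      ∑ r ∈ range (n + 1), (j.choose r : R) * (x ^ (n - r) * (y - x) ^ r) := by
  have hy : y ^ j = ((y - x) + x) ^ j := by rw [sub_add_cancel]
  rw [hy, add_pow, mul_sum, show n + 1 = (j + 1) + (n - j) by omega, sum_range_add _ (j + 1)]
  have hvanish : ∀ i ∈ range (n - j),
      (j.choose (j + 1 + i) : R) * (x ^ (n - (j + 1 + i)) * (y - x) ^ (j + 1 + i)) = 0 := by
    intro i _
    rw [Nat.choose_eq_zero_of_lt (by omega), Nat.cast_zero, zero_mul]
  rw [sum_eq_zero hvanish, add_zero]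
  refine sum_congr rfl fun r hr => ?_
  have hr : r ≤ j := Nat.lt_succ_iff.mp (mem_range.mp hr)
  rw [show n - r = (n - j) + (j - r) by omega, pow_add]
  ring

theorem sum_mul_pow_mul_pow_eq_sum_moment (x y : R) (n : ℕ) (a : ℕ → R) :
    ∑ j ∈ range (n + 1), a j * x ^ (n - j) * y ^ j =
      ∑ r ∈ range (n + 1),
        (∑ j ∈ range (n + 1), (j.choose r : R) * a j) * (x ^ (n - r) * (y - x) ^ r) := by
  have hterm : ∀ j ∈ range (n + 1), a j * x ^ (n - j) * y ^ j =
      ∑ r ∈ range (n + 1), (j.choose r : R) * a j * (x ^ (n - r) * (y - x) ^ r) := by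
    intro j hj
    rw [mul_assoc, pow_mul_pow_eq_sum_choose_mul x y (Nat.lt_succ_iff.mp (mem_range.mp hj)),
      mul_sum]
    exact sum_congr rfl fun r _ => by ring
  rw [sum_congr rfl hterm, sum_comm]
  simp only [sum_mul]

theorem add_sub_one_mul_pow_mul_sub_pow_eq_sum (q x y : R) {j n : ℕ} (hj : j ≤ n) :
    (x + (q - 1) * y) ^ (n - j) * (x - y) ^ j =
      ∑ r ∈ range (n + 1),
        (if j ≤ r then (-1) ^ j * (q - 1) ^ (r - j) * ((n - j).choose (r - j) : R) else 0) *
          q ^ (n - r) * (x ^ (n - r) * (y - x) ^ r) := by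
  rw [show x + (q - 1) * y = (q - 1) * (y - x) + q * x by ring,
    show x - y = -(y - x) by ring, add_pow, sum_mul,
    show n + 1 = j + (n - j + 1) by omega, sum_range_add _ j]
  have hvanish : ∀ r ∈ range j,
      (if j ≤ r then (-1) ^ j * (q - 1) ^ (r - j) * ((n - j).choose (r - j) : R) else 0) *
        q ^ (n - r) * (x ^ (n - r) * (y - x) ^ r) = 0 := by
    intro r hr
    rw [if_neg (by simpa using hr), zero_mul, zero_mul]
  rw [sum_eq_zero hvanish, zero_add]
  refine sum_congr rfl fun i hi => ?_
  have hi : i ≤ n - j := Nat.lt_succ_iff.mp (mem_range.mp hi)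
  rw [if_pos (Nat.le_add_right j i), Nat.add_sub_cancel_left,
    show n - (j + i) = n - j - i by omega, neg_pow, mul_pow (q - 1), mul_pow q]
  ring

end CommRing

theorem zpow_sub_natCast_eq_zpow_mul_pow {G : Type*} [GroupWithZero G] {q : G} (hq : q ≠ 0)
    (k : ℤ) {r n : ℕ} (hrn : r ≤ n) : q ^ (k - r) = q ^ (k - n) * q ^ (n - r) := by
  rw [← zpow_natCast, ← zpow_add₀ hq, Nat.cast_sub hrn]
  ring_nf

theorem form3_to_mac_general (q : ℝ) (hq : 0 < q) (k n : ℕ) (A B : ℕ → ℝ)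
    (h : ∀ r ≤ n,
      ∑ j ∈ Finset.range (n + 1), (j.choose r : ℝ) * A j =
      q ^ ((k : ℤ) - (r : ℤ)) *
        ∑ j ∈ Finset.range (n + 1),
          if j ≤ r then
            (-1 : ℝ) ^ j * (q - 1) ^ (r - j) * ((n - j).choose (r - j) : ℝ) * B j
          else 0) :
    ∀ x y : ℝ,
      ∑ j ∈ Finset.range (n + 1), A j * x ^ (n - j) * y ^ j =
      q ^ ((k : ℤ) - (n : ℤ)) *
        ∑ j ∈ Finset.range (n + 1), B j * (x + (q - 1) * y) ^ (n - j) * (x - y) ^ j := by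
  intro x y
  set c : ℕ → ℕ → ℝ := fun j r =>
    if j ≤ r then (-1) ^ j * (q - 1) ^ (r - j) * ((n - j).choose (r - j) : ℝ) else 0
  have hmoment : ∀ r ∈ range (n + 1),
      (∑ j ∈ range (n + 1), (j.choose r : ℝ) * A j) * (x ^ (n - r) * (y - x) ^ r) =
        q ^ ((k : ℤ) - (n : ℤ)) *
          ∑ j ∈ range (n + 1), B j * (c j r * q ^ (n - r) * (x ^ (n - r) * (y - x) ^ r)) := by
    intro r hr
    have hr : r ≤ n := Nat.lt_succ_iff.mp (mem_range.mp hr)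
    rw [h r hr, zpow_sub_natCast_eq_zpow_mul_pow hq.ne' k hr]
    simp only [mul_sum, sum_mul]
    refine sum_congr rfl fun j _ => ?_
    simp only [c, ite_mul, zero_mul, mul_ite, mul_zero]
    split_ifs <;> ring
  rw [sum_mul_pow_mul_pow_eq_sum_moment, sum_congr rfl hmoment, ← mul_sum, sum_comm]
  refine congrArg _ (sum_congr rfl fun j hj => ?_)
  rw [← mul_sum, mul_assoc,
    add_sub_one_mul_pow_mul_sub_pow_eq_sum q x y (Nat.lt_succ_iff.mp (mem_range.mp hj))]

theorem form3_to_mac (q : ℝ) (hq : 0 < q) (k n : ℕ) (hkn : k ≤ n) (A B : ℕ → ℝ)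
    (h : ∀ r ≤ n,
      ∑ j ∈ Finset.range (n + 1), (j.choose r : ℝ) * A j =
      q ^ ((k : ℤ) - (r : ℤ)) *
        ∑ j ∈ Finset.range (n + 1),
          if j ≤ r then
            (-1 : ℝ) ^ j * (q - 1) ^ (r - j) * ((n - j).choose (r - j) : ℝ) * B j
          else 0) :
    ∀ x y : ℝ,
      ∑ j ∈ Finset.range (n + 1), A j * x ^ (n - j) * y ^ j =
      q ^ ((k : ℤ) - (n : ℤ)) *
        ∑ j ∈ Finset.range (n + 1), B j * (x + (q - 1) * y) ^ (n - j) * (x - y) ^ j :=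
  form3_to_mac_general q hq k n A B h
end

section
/- Let q > 0 be a real number, k ≤ n natural numbers, and A_0,…,A_n and B_0,…,B_n real numbers such that for every r with 0 ≤ r ≤ n: Σ_{j=0}^n C(n-j, r) A_j = q^{k-r} Σ_{j=0}^n C(n-j, r-j) B_j. Then Σ_{j=0}^n A_j x^{n-j} y^j = q^{k-n} Σ_{j=0}^n B_j (x+(q-1)y)^{n-j} (x-y)^j as polynomials. -/
/-!
Substitute `x = u + y` with `u = x - y`, so that `x + (q - 1) y = u + q y`, and expand both sides
in the monomials `u ^ i * y ^ (n - i)`. The coefficient of `u ^ i * y ^ (n - i)` is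
`∑ j, C(n - j, i) A j` on the left and `q ^ (k - n) * q ^ (n - i) * ∑ j ≤ i, C(n - j, i - j) B j`
on the right, and these agree by hypothesis `r = i`.
-/

open Finset

section BinomialExpansion

variable {R : Type*} [CommSemiring R]

theorem pow_mul_add_pow_eq_sum_choose (u v : R) {j n : ℕ} (hjn : j ≤ n) :
    v ^ j * (u + v) ^ (n - j) =
      ∑ i ∈ range (n + 1), ((n - j).choose i : R) * (u ^ i * v ^ (n - i)) := by
  have hlen : n + 1 = (n - j + 1) + j := by omega
  rw [hlen, sum_range_add, add_pow, mul_sum]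
  -- the terms with `i > n - j` vanish because `C(n - j, i) = 0`
  have htail : ∑ s ∈ range j, ((n - j).choose (n - j + 1 + s) : R) *
      (u ^ (n - j + 1 + s) * v ^ (n - (n - j + 1 + s))) = 0 :=
    sum_eq_zero fun s _ => by rw [Nat.choose_eq_zero_of_lt (by omega), Nat.cast_zero, zero_mul]
  rw [htail, add_zero]
  refine sum_congr rfl fun s hs => ?_
  have hs : s ≤ n - j := Nat.lt_succ_iff.mp (mem_range.mp hs)
  rw [show n - s = (n - j - s) + j by omega, pow_add]
  ring

theorem pow_mul_add_pow_eq_sum_ite_choose (u v : R) {j n : ℕ} (hjn : j ≤ n) :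
    u ^ j * (u + v) ^ (n - j) =
      ∑ i ∈ range (n + 1),
        if j ≤ i then ((n - j).choose (i - j) : R) * (u ^ i * v ^ (n - i)) else 0 := by
  have hlen : n + 1 = j + (n - j + 1) := by omega
  rw [hlen, sum_range_add, sum_eq_zero fun i hi => if_neg (by simpa using hi), zero_add,
    add_pow, mul_sum]
  refine sum_congr rfl fun s _ => ?_
  rw [if_pos (Nat.le_add_right j s), Nat.add_sub_cancel_left, pow_add,
    show n - (j + s) = n - j - s by omega]
  ring

theorem sum_mul_add_pow_mul_pow (a : ℕ → R) (u v : R) (n : ℕ) :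
    ∑ j ∈ range (n + 1), a j * (u + v) ^ (n - j) * v ^ j =
      ∑ i ∈ range (n + 1),
        (∑ j ∈ range (n + 1), ((n - j).choose i : R) * a j) * (u ^ i * v ^ (n - i)) := by
  calc ∑ j ∈ range (n + 1), a j * (u + v) ^ (n - j) * v ^ j
      = ∑ j ∈ range (n + 1), ∑ i ∈ range (n + 1),
          ((n - j).choose i : R) * a j * (u ^ i * v ^ (n - i)) := by
        refine sum_congr rfl fun j hj => ?_
        rw [mul_assoc, mul_comm ((u + v) ^ _),
          pow_mul_add_pow_eq_sum_choose u v (Nat.lt_succ_iff.mp (mem_range.mp hj)), mul_sum]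
        exact sum_congr rfl fun i _ => by ring
    _ = _ := by rw [sum_comm]; simp only [sum_mul]

theorem sum_mul_add_pow_mul_pow_left (b : ℕ → R) (u v : R) (n : ℕ) :
    ∑ j ∈ range (n + 1), b j * (u + v) ^ (n - j) * u ^ j =
      ∑ i ∈ range (n + 1),
        (∑ j ∈ range (n + 1), if j ≤ i then ((n - j).choose (i - j) : R) * b j else 0) *
          (u ^ i * v ^ (n - i)) := by
  calc ∑ j ∈ range (n + 1), b j * (u + v) ^ (n - j) * u ^ j
      = ∑ j ∈ range (n + 1), ∑ i ∈ range (n + 1),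
          if j ≤ i then ((n - j).choose (i - j) : R) * b j * (u ^ i * v ^ (n - i)) else 0 := by
        refine sum_congr rfl fun j hj => ?_
        rw [mul_assoc, mul_comm ((u + v) ^ _),
          pow_mul_add_pow_eq_sum_ite_choose u v (Nat.lt_succ_iff.mp (mem_range.mp hj)), mul_sum]
        refine sum_congr rfl fun i _ => ?_
        split_ifs <;> ring
    _ = _ := by
        rw [sum_comm]
        simp only [sum_mul, ite_mul, zero_mul]

end BinomialExpansion

theorem form4_to_mac_general (q : ℝ) (hq : 0 < q) (k n : ℕ) (A B : ℕ → ℝ)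
    (h : ∀ r ≤ n,
      ∑ j ∈ Finset.range (n + 1), ((n - j).choose r : ℝ) * A j =
      q ^ ((k : ℤ) - (r : ℤ)) *
        ∑ j ∈ Finset.range (n + 1),
          if j ≤ r then ((n - j).choose (r - j) : ℝ) * B j else 0) :
    ∀ x y : ℝ,
      ∑ j ∈ Finset.range (n + 1), A j * x ^ (n - j) * y ^ j =
      q ^ ((k : ℤ) - (n : ℤ)) *
        ∑ j ∈ Finset.range (n + 1), B j * (x + (q - 1) * y) ^ (n - j) * (x - y) ^ j := by
  intro x y
  have hx : x = (x - y) + y := by ring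
  have hx' : x + (q - 1) * y = (x - y) + q * y := by ring
  rw [hx', sum_mul_add_pow_mul_pow_left, mul_sum]
  nth_rewrite 1 [hx]
  rw [sum_mul_add_pow_mul_pow]
  refine sum_congr rfl fun i hi => ?_
  have hin : i ≤ n := Nat.lt_succ_iff.mp (mem_range.mp hi)
  have hpow : q ^ ((k : ℤ) - i) = q ^ ((k : ℤ) - n) * q ^ (n - i) := by
    rw [← zpow_natCast, ← zpow_add₀ hq.ne', Nat.cast_sub hin]
    ring_nf
  rw [h i hin, hpow, mul_pow]
  ring

theorem form4_to_mac (q : ℝ) (hq : 0 < q) (k n : ℕ) (hkn : k ≤ n) (A B : ℕ → ℝ)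
    (h : ∀ r ≤ n,
      ∑ j ∈ Finset.range (n + 1), ((n - j).choose r : ℝ) * A j =
      q ^ ((k : ℤ) - (r : ℤ)) *
        ∑ j ∈ Finset.range (n + 1),
          if j ≤ r then ((n - j).choose (r - j) : ℝ) * B j else 0) :
    ∀ x y : ℝ,
      ∑ j ∈ Finset.range (n + 1), A j * x ^ (n - j) * y ^ j =
      q ^ ((k : ℤ) - (n : ℤ)) *
        ∑ j ∈ Finset.range (n + 1), B j * (x + (q - 1) * y) ^ (n - j) * (x - y) ^ j :=
  form4_to_mac_general q hq k n A B h
end
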